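/- arXiv:1209.1384 — 2 statements merged into one kernel-verified Lean document; each statement's English description precedes it below -/
import Mathlib

section
/- Let p be a prime, n ≥ 1, and E an ultrametric Banach space over ℚ_p. Then the map sending a continuous function f : (ℤ_p)^n → E to its family of Mahler coefficients (a_ν(f))_{ν ∈ ℕ^n} is a bijection from C((ℤ_p)^n, E) onto the space c₀(ℕ^n, E) of families b : ℕ^n → E with ‖b_ν‖ → 0 along the cofinite filter; that is, for every b : ℕ^n → E with ‖b_ν‖ → 0 there is a unique continuous f : (ℤ_p)^n → E whose Mahler coefficients are the b_ν, and moreover sup_{x} ‖f(x)‖ = sup_{ν} ‖b_ν‖ (the bijection is isometric for the supremum norms). -/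
/-!
Write `x = (x₀, y)` with `x₀ ∈ ℤ_p`. The Mahler coefficient of `f` at `(k, ν)` is the `ν`-th
Mahler coefficient of `Δᵏ F (0)`, where `F : ℤ_p → C(ℤ_pⁿ⁻¹, E)` is `x₀ ↦ f (x₀, ·)`: the weights
factor coordinatewise and the one-dimensional weights are those of the iterated forward difference.
Since `C(ℤ_pⁿ⁻¹, E)` is again an ultrametric Banach space, the one-variable Mahler theorem applies
to `F`, and all three claims follow by induction on `n`.
-/

open Filter Finset Topology
open scoped fwdDiff

section Cofinite

variable {α β E : Type*} [SeminormedAddCommGroup E]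

theorem tendsto_cofinite_prod_of_norm_le {F : α × β → E} {G : α → ℝ}
    (hG : Tendsto G cofinite (𝓝 0)) (hFG : ∀ a b, ‖F (a, b)‖ ≤ G a)
    (hF : ∀ a, Tendsto (fun b => F (a, b)) cofinite (𝓝 0)) :
    Tendsto F cofinite (𝓝 0) := by
  refine NormedAddGroup.tendsto_nhds_zero.mpr fun ε hε => eventually_cofinite.mpr ?_
  have hA : {a | ¬ G a < ε}.Finite := eventually_cofinite.mp (hG.eventually (gt_mem_nhds hε))
  have hB a : {b | ¬ ‖F (a, b)‖ < ε}.Finite :=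
    eventually_cofinite.mp (NormedAddGroup.tendsto_nhds_zero.mp (hF a) ε hε)
  refine (hA.biUnion fun a _ => (hB a).image (Prod.mk a)).subset ?_
  rintro ⟨a, b⟩ hab
  exact Set.mem_biUnion (x := a) (fun h => hab ((hFG a b).trans_lt h)) ⟨b, hab, rfl⟩

theorem tendsto_iSup_norm_curry_cofinite {F : α × β → E} (hF : Tendsto F cofinite (𝓝 0)) :
    Tendsto (fun a => ⨆ b, ‖F (a, b)‖) cofinite (𝓝 0) := by
  refine NormedAddGroup.tendsto_nhds_zero.mpr fun ε hε => ?_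
  have hS : {x | ¬ ‖F x‖ < ε / 2}.Finite :=
    eventually_cofinite.mp (NormedAddGroup.tendsto_nhds_zero.mp hF _ (half_pos hε))
  refine eventually_cofinite.mpr ((hS.image Prod.fst).subset fun a ha => ?_)
  by_contra hmem
  have hsmall : ⨆ b, ‖F (a, b)‖ ≤ ε / 2 :=
    Real.iSup_le (fun b => not_lt.mp fun h => hmem ⟨(a, b), not_lt.mpr h.le, rfl⟩) (by positivity)
  refine ha ?_
  rw [Real.norm_of_nonneg (Real.iSup_nonneg fun _ => norm_nonneg _)]
  linarith

end Cofinite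

namespace ContinuousMap

variable {X E : Type*} [TopologicalSpace X] {n : ℕ}

def finConsCurry [TopologicalSpace E] (f : C(Fin (n + 1) → X, E)) : C(X, C(Fin n → X, E)) :=
  (f.comp ⟨fun q : X × (Fin n → X) => (Fin.cons q.1 q.2 : Fin (n + 1) → X),
    by fun_prop⟩).curry

@[simp]
theorem finConsCurry_apply [TopologicalSpace E] (f : C(Fin (n + 1) → X, E)) (x : X)
    (y : Fin n → X) : finConsCurry f x y = f (Fin.cons x y) :=
  rfl

theorem finConsCurry_surjective [TopologicalSpace E] [LocallyCompactSpace X] :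
    Function.Surjective (finConsCurry : C(Fin (n + 1) → X, E) → C(X, C(Fin n → X, E))) := by
  intro g
  refine ⟨g.uncurry.comp ⟨fun z => (z 0, Fin.tail z), (continuous_apply 0).prodMk
    (continuous_pi fun i => continuous_apply i.succ)⟩, ?_⟩
  ext x y
  simp

theorem norm_finConsCurry [CompactSpace X] [SeminormedAddCommGroup E]
    (f : C(Fin (n + 1) → X, E)) : ‖finConsCurry f‖ = ‖f‖ := by
  refine le_antisymm ((norm_le _ (norm_nonneg f)).mpr fun x => (norm_le _ (norm_nonneg f)).mpr
    fun y => f.norm_coe_le_norm _) ((norm_le _ (norm_nonneg _)).mpr fun z => ?_)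
  calc ‖f z‖ = ‖finConsCurry f (z 0) (Fin.tail z)‖ := by
        rw [finConsCurry_apply, Fin.cons_self_tail]
    _ ≤ ‖finConsCurry f (z 0)‖ := norm_coe_le_norm _ _
    _ ≤ ‖finConsCurry f‖ := norm_coe_le_norm _ _

end ContinuousMap

theorem Fin.sum_Iic_cons {α M : Type*} [DecidableEq α] [PartialOrder α]
    [LocallyFiniteOrderBot α] [AddCommMonoid M] {n : ℕ} (k : α) (ν : Fin n → α)
    (g : (Fin (n + 1) → α) → M) :
    ∑ μ ∈ Iic (Fin.cons k ν : Fin (n + 1) → α), g μ =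
      ∑ j ∈ Iic k, ∑ μ ∈ Iic ν, g (Fin.cons j μ) := by
  rw [← sum_product']
  refine (sum_equiv (Fin.consEquiv fun _ => α) (fun _ => ?_) fun _ _ => rfl).symm
  simp only [mem_product, mem_Iic]
  exact (Fin.cons_le_cons (α := fun _ => α)).symm

namespace PadicInt

variable (p : ℕ) [Fact p.Prime] {n : ℕ}

noncomputable def mahlerWeight (ν μ : Fin n → ℕ) : ℚ_[p] :=
  (-1 : ℚ_[p]) ^ ((∑ i, ν i) - (∑ i, μ i)) * ∏ i, ((ν i).choose (μ i) : ℚ_[p])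

theorem norm_mahlerWeight_le (ν μ : Fin n → ℕ) : ‖mahlerWeight p ν μ‖ ≤ 1 := by
  rw [mahlerWeight, norm_mul, norm_pow, norm_neg, norm_one, one_pow, one_mul]
  exact_mod_cast Padic.norm_int_le_one (∏ i, (ν i).choose (μ i) : ℕ)

variable {p}

theorem mahlerWeight_cons {k j : ℕ} {ν μ : Fin n → ℕ} (hjk : j ≤ k) (hμν : μ ≤ ν) :
    mahlerWeight p (Fin.cons k ν) (Fin.cons j μ) =
      (-1) ^ (k - j) * k.choose j * mahlerWeight p ν μ := by
  have hsum : ∑ i, μ i ≤ ∑ i, ν i := sum_le_sum fun i _ => hμν i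
  simp only [mahlerWeight, Fin.sum_univ_succ, Fin.prod_univ_succ, Fin.cons_zero, Fin.cons_succ]
  rw [show k + ∑ i, ν i - (j + ∑ i, μ i) = (k - j) + (∑ i, ν i - ∑ i, μ i) by omega, pow_add]
  ring

noncomputable def mahlerCoeff {E : Type*} [AddCommGroup E] [Module ℚ_[p] E]
    (f : (Fin n → ℤ_[p]) → E) (ν : Fin n → ℕ) : E :=
  ∑ μ ∈ Iic ν, mahlerWeight p ν μ • f (fun i => (μ i : ℤ_[p]))

theorem mahlerCoeff_finCons {E : Type*} [AddCommGroup E] [Module ℚ_[p] E]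
    (f : (Fin (n + 1) → ℤ_[p]) → E) (k : ℕ) (ν : Fin n → ℕ) :
    mahlerCoeff f (Fin.cons k ν) =
      mahlerCoeff (fun y => (Δ_[1])^[k] (fun x => f (Fin.cons x y)) 0) ν := by
  simp only [mahlerCoeff, fwdDiff_iter_eq_sum_shift, smul_sum, Fin.sum_Iic_cons,
    ← Nat.range_succ_eq_Iic]
  rw [sum_comm]
  refine sum_congr rfl fun μ hμ => sum_congr rfl fun j hj => ?_
  rw [mahlerWeight_cons (Nat.lt_succ_iff.mp (mem_range.mp hj)) (mem_Iic.mp hμ),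
    ← Int.cast_smul_eq_zsmul ℚ_[p], smul_smul]
  congr 1
  · push_cast; ring
  · congr 1
    ext i
    refine Fin.cases ?_ (fun i => ?_) i <;> simp

theorem mahlerCoeff_sub {E : Type*} [AddCommGroup E] [Module ℚ_[p] E]
    (f g : (Fin n → ℤ_[p]) → E) : mahlerCoeff (f - g) = mahlerCoeff f - mahlerCoeff g := by
  ext ν
  simp only [mahlerCoeff, Pi.sub_apply, smul_sub, sum_sub_distrib]

theorem mahlerCoeff_fin_zero {E : Type*} [AddCommGroup E] [Module ℚ_[p] E]
    (f : (Fin 0 → ℤ_[p]) → E) (ν : Fin 0 → ℕ) : mahlerCoeff f ν = f 0 := by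
  have hIic : Iic ν = {ν} := by ext μ; simp [Subsingleton.elim μ ν]
  rw [mahlerCoeff, hIic, sum_singleton, Subsingleton.elim (fun i => (ν i : ℤ_[p])) 0]
  simp [mahlerWeight]

section Normed

variable {E : Type*} [NormedAddCommGroup E] [NormedSpace ℚ_[p] E]

theorem norm_mahlerCoeff_le [IsUltrametricDist E] (f : C(Fin n → ℤ_[p], E)) (ν : Fin n → ℕ) :
    ‖mahlerCoeff ⇑f ν‖ ≤ ‖f‖ := by
  refine IsUltrametricDist.norm_sum_le_of_forall_le_of_nonneg (norm_nonneg f) fun μ _ => ?_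
  rw [norm_smul]
  exact (mul_le_of_le_one_left (norm_nonneg _) (norm_mahlerWeight_le p ν μ)).trans
    (f.norm_coe_le_norm _)

theorem mahlerCoeff_finCons_eq_mahlerCoeff_fwdDiff (f : C(Fin (n + 1) → ℤ_[p], E)) (k : ℕ)
    (ν : Fin n → ℕ) :
    mahlerCoeff ⇑f (Fin.cons k ν) = mahlerCoeff ⇑((Δ_[1])^[k] ⇑f.finConsCurry 0) ν := by
  rw [mahlerCoeff_finCons]
  congr 1
  ext y
  simp [fwdDiff_iter_eq_sum_shift]

end Normed

theorem norm_le_of_forall_norm_fwdDiff_iter_le {F : Type*} [NormedAddCommGroup F]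
    [Module ℤ_[p] F] [IsBoundedSMul ℤ_[p] F] [IsUltrametricDist F] [CompleteSpace F]
    {f : C(ℤ_[p], F)} {C : ℝ} (h : ∀ k, ‖(Δ_[1])^[k] ⇑f 0‖ ≤ C) : ‖f‖ ≤ C := by
  rw [← (mahlerEquiv F).norm_map f, ← ZeroAtInftyContinuousMap.norm_toBCF_eq_norm]
  exact BoundedContinuousFunction.norm_le_of_nonempty.mpr h

section Banach

variable {E : Type*} [NormedAddCommGroup E] [NormedSpace ℚ_[p] E] [IsUltrametricDist E]

-- Restriction of scalars to `ℤ_[p]`, the setting of Mathlib's one-variable Mahler theory.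
noncomputable local instance : Module ℤ_[p] E := Module.compHom E (algebraMap ℤ_[p] ℚ_[p])

local instance : IsBoundedSMul ℤ_[p] E :=
  IsBoundedSMul.of_norm_smul_le fun r x => (norm_smul (algebraMap ℤ_[p] ℚ_[p] r) x).le

theorem tendsto_mahlerCoeff {n : ℕ} (f : C(Fin n → ℤ_[p], E)) :
    Tendsto (mahlerCoeff ⇑f) cofinite (𝓝 0) := by
  induction n with
  | zero => rw [cofinite_eq_bot]; exact tendsto_bot
  | succ n ih =>
    have hdiff : Tendsto (fun k => ‖(Δ_[1])^[k] ⇑f.finConsCurry 0‖) cofinite (𝓝 0) := by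
      rw [Nat.cofinite_eq_atTop]
      exact tendsto_zero_iff_norm_tendsto_zero.mp (fwdDiff_tendsto_zero _)
    have hprod : Tendsto (fun q : ℕ × (Fin n → ℕ) => mahlerCoeff ⇑f (Fin.cons q.1 q.2))
        cofinite (𝓝 0) := by
      simp only [mahlerCoeff_finCons_eq_mahlerCoeff_fwdDiff]
      exact tendsto_cofinite_prod_of_norm_le hdiff (fun _ _ => norm_mahlerCoeff_le _ _)
        fun k => ih ((Δ_[1])^[k] ⇑f.finConsCurry 0)
    exact (hprod.comp (Fin.consEquiv fun _ => ℕ).symm.injective.tendsto_cofinite).congr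
      fun μ => congrArg _ (Fin.cons_self_tail μ)

variable [CompleteSpace E]

theorem norm_eq_iSup_norm_mahlerCoeff {n : ℕ} (f : C(Fin n → ℤ_[p], E)) :
    ‖f‖ = ⨆ ν, ‖mahlerCoeff ⇑f ν‖ := by
  induction n with
  | zero =>
    rw [ContinuousMap.norm_eq_iSup_norm, ciSup_unique, ciSup_unique, mahlerCoeff_fin_zero]
    exact congrArg (‖f ·‖) (Subsingleton.elim _ _)
  | succ n ih =>
    have hbdd : BddAbove (Set.range fun μ => ‖mahlerCoeff ⇑f μ‖) :=
      ⟨‖f‖, Set.forall_mem_range.2 (norm_mahlerCoeff_le f)⟩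
    refine le_antisymm ?_ (ciSup_le (norm_mahlerCoeff_le f))
    rw [← ContinuousMap.norm_finConsCurry]
    refine norm_le_of_forall_norm_fwdDiff_iter_le fun k => ?_
    rw [ih]
    exact ciSup_le fun ν => mahlerCoeff_finCons_eq_mahlerCoeff_fwdDiff f k ν ▸ le_ciSup hbdd _

theorem mahlerCoeff_injective {n : ℕ} :
    Function.Injective fun f : C(Fin n → ℤ_[p], E) => mahlerCoeff ⇑f := by
  intro f g hfg
  rw [← sub_eq_zero, ← norm_eq_zero, norm_eq_iSup_norm_mahlerCoeff, ContinuousMap.coe_sub,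
    mahlerCoeff_sub]
  simp only at hfg
  simp [hfg]

theorem exists_mahlerCoeff_eq {n : ℕ} (b : (Fin n → ℕ) → E) (hb : Tendsto b cofinite (𝓝 0)) :
    ∃ f : C(Fin n → ℤ_[p], E), mahlerCoeff ⇑f = b := by
  induction n with
  | zero =>
    refine ⟨.const _ (b 0), funext fun ν => ?_⟩
    rw [mahlerCoeff_fin_zero, ContinuousMap.const_apply, Subsingleton.elim ν 0]
  | succ n ih =>
    have hprod : Tendsto (fun q : ℕ × (Fin n → ℕ) => b (Fin.cons q.1 q.2)) cofinite (𝓝 0) :=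
      hb.comp (Fin.consEquiv fun _ => ℕ).injective.tendsto_cofinite
    choose c hc using fun k => ih _ (hprod.comp (Prod.mk_right_injective k).tendsto_cofinite)
    have hc0 : Tendsto c atTop (𝓝 0) := by
      rw [← Nat.cofinite_eq_atTop, tendsto_zero_iff_norm_tendsto_zero]
      simpa only [norm_eq_iSup_norm_mahlerCoeff, hc, Function.comp_def]
        using tendsto_iSup_norm_curry_cofinite hprod
    obtain ⟨f, hf⟩ := ContinuousMap.finConsCurry_surjective (mahlerSeries (p := p) c)
    refine ⟨f, funext fun μ => ?_⟩
    rw [← Fin.cons_self_tail μ, mahlerCoeff_finCons_eq_mahlerCoeff_fwdDiff, hf,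
      fwdDiff_mahlerSeries hc0, hc]
    rfl

end Banach

end PadicInt

theorem mahler_equiv_banach_general (p : ℕ) [Fact p.Prime] (n : ℕ)
    (E : Type*) [NormedAddCommGroup E] [NormedSpace ℚ_[p] E] [IsUltrametricDist E]
    [CompleteSpace E]
    (coeff : C((Fin n → ℤ_[p]), E) → (Fin n → ℕ) → E)
    (hcoeff : ∀ (f : C((Fin n → ℤ_[p]), E)) (ν : Fin n → ℕ),
      coeff f ν = ∑ μ ∈ Finset.Iic ν,
        ((-1 : ℚ_[p]) ^ ((∑ i, ν i) - (∑ i, μ i)) * ∏ i, ((ν i).choose (μ i) : ℚ_[p])) •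
          f (fun i => ((μ i : ℤ_[p])))) :
    (∀ f : C((Fin n → ℤ_[p]), E),
        Tendsto (fun ν : Fin n → ℕ => ‖coeff f ν‖) cofinite (nhds 0)) ∧
    (∀ b : (Fin n → ℕ) → E, Tendsto (fun ν => ‖b ν‖) cofinite (nhds 0) →
        ∃! f : C((Fin n → ℤ_[p]), E), coeff f = b) ∧
    (∀ f : C((Fin n → ℤ_[p]), E),
        (⨆ x : Fin n → ℤ_[p], ‖f x‖) = ⨆ ν : Fin n → ℕ, ‖coeff f ν‖) := by
  obtain rfl : coeff = fun f : C((Fin n → ℤ_[p]), E) => PadicInt.mahlerCoeff ⇑f :=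
    funext fun f => funext (hcoeff f)
  refine ⟨fun f => tendsto_zero_iff_norm_tendsto_zero.mp (PadicInt.tendsto_mahlerCoeff f),
    fun b hb => ?_, fun f => ?_⟩
  · obtain ⟨f, hf⟩ :=
      PadicInt.exists_mahlerCoeff_eq (p := p) b (tendsto_zero_iff_norm_tendsto_zero.mpr hb)
    exact ⟨f, hf, fun g hg => PadicInt.mahlerCoeff_injective (hg.trans hf.symm)⟩
  · rw [← ContinuousMap.norm_eq_iSup_norm, PadicInt.norm_eq_iSup_norm_mahlerCoeff]

/-- **Mahler's theorem in several variables, Banach case** (Lemma `strongMahcts`).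
For `E` an ultrametric `ℚ_p`-Banach space, the map sending a continuous function
`f : (ℤ_p)^n → E` to its family of Mahler coefficients is a bijection onto
`c₀(ℕ^n, E)`, isometric for the supremum norms. -/
theorem mahler_equiv_banach (p : ℕ) [Fact p.Prime] (n : ℕ) (hn : 1 ≤ n)
    (E : Type*) [NormedAddCommGroup E] [NormedSpace ℚ_[p] E] [IsUltrametricDist E]
    [CompleteSpace E]
    (coeff : C((Fin n → ℤ_[p]), E) → (Fin n → ℕ) → E)
    (hcoeff : ∀ (f : C((Fin n → ℤ_[p]), E)) (ν : Fin n → ℕ),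
      coeff f ν = ∑ μ ∈ Finset.Iic ν,
        ((-1 : ℚ_[p]) ^ ((∑ i, ν i) - (∑ i, μ i)) * ∏ i, ((ν i).choose (μ i) : ℚ_[p])) •
          f (fun i => ((μ i : ℤ_[p])))) :
    (∀ f : C((Fin n → ℤ_[p]), E),
        Tendsto (fun ν : Fin n → ℕ => ‖coeff f ν‖) cofinite (nhds 0)) ∧
    (∀ b : (Fin n → ℕ) → E, Tendsto (fun ν => ‖b ν‖) cofinite (nhds 0) →
        ∃! f : C((Fin n → ℤ_[p]), E), coeff f = b) ∧
    (∀ f : C((Fin n → ℤ_[p]), E),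
        (⨆ x : Fin n → ℤ_[p], ‖f x‖) = ⨆ ν : Fin n → ℕ, ‖coeff f ν‖) :=
  mahler_equiv_banach_general p n E coeff hcoeff
end

section
/- Let (K,|·|) be a complete ultrametric field, n ≥ 1, and U ⊆ K^n a locally closed, locally cartesian subset. Then every compact subset C of U is contained in a compact, locally cartesian subset L with C ⊆ L ⊆ U. -/
/-- A subset of `K^n` is *cartesian* if it is a product `V₁ × ⋯ × Vₙ` of subsets of `K`
none of which has an isolated point. -/
def IsCartesianSet {K : Type*} [TopologicalSpace K] {n : ℕ} (V : Set (Fin n → K)) : Prop :=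
  ∃ W : Fin n → Set K, V = Set.univ.pi W ∧ ∀ i, Preperfect (W i)

/-- A subset of `K^n` is *locally cartesian* if each of its points has a relatively open
neighbourhood in it which is cartesian. -/
def IsLocallyCartesian {K : Type*} [TopologicalSpace K] {n : ℕ} (U : Set (Fin n → K)) : Prop :=
  ∀ x ∈ U, ∃ V : Set (Fin n → K),
    x ∈ V ∧ V ⊆ U ∧ (∃ O, IsOpen O ∧ V = U ∩ O) ∧ IsCartesianSet V

/-- A subset `U` of a topological space is *locally closed* if for each `x ∈ U` and each
neighbourhood `W` of `x` in `U` there is a neighbourhood `V ⊆ W` of `x` in `U` which is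
closed in the ambient space. -/
def IsLocallyClosedSet {α : Type*} [TopologicalSpace α] (U : Set α) : Prop :=
  ∀ x ∈ U, ∀ W ∈ nhdsWithin x U, W ⊆ U →
    ∃ V ∈ nhdsWithin x U, V ⊆ W ∧ IsClosed V

/-!
In a complete metric space, a compact subset `A` of a closed set `Z` without isolated points lies
in a compact subset of `Z` without isolated points: starting from finite `2⁻ᵏ`-nets of `A`,
repeatedly add to every point already chosen a different point of `Z` at distance at most `2⁻ᵏ`.
The closure of all chosen points is totally bounded because the added moves have summable lengths.

Near each of its points, a locally closed, locally cartesian `U ⊆ Kⁿ` meets a small ball `B` in a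
closed product of closed sets without isolated points, so this hull, taken coordinatewise, puts
`C ∩ B` inside a compact cartesian subset of `U ∩ B`. Two ultrametric balls are nested or disjoint,
so the maximal balls of a finite cover of `C` are disjoint and open, and the union of the pieces
over them is locally cartesian.
-/

open Metric Set Filter Topology Function

def preperfectHullStage {X : Type*} (N : ℕ → Set X) (g : X → ℕ → X) : ℕ → Set X
  | 0 => N 0
  | k + 1 => preperfectHullStage N g k ∪ (g · (k + 1)) '' preperfectHullStage N g k ∪ N (k + 1)

section PreperfectHull

variable {X : Type*} {N : ℕ → Set X} {g : X → ℕ → X}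

lemma preperfectHullStage_finite (hN : ∀ k, (N k).Finite) (k : ℕ) :
    (preperfectHullStage N g k).Finite := by
  induction k with
  | zero => exact hN 0
  | succ k ih => exact (ih.union (ih.image _)).union (hN (k + 1))

lemma preperfectHullStage_subset {Z : Set X} (hN : ∀ k, N k ⊆ Z)
    (hg : ∀ z ∈ Z, ∀ k, g z k ∈ Z) (k : ℕ) : preperfectHullStage N g k ⊆ Z := by
  induction k with
  | zero => exact hN 0
  | succ k ih =>
    refine union_subset (union_subset ih ?_) (hN (k + 1))
    rintro _ ⟨z, hz, rfl⟩
    exact hg z (ih hz) (k + 1)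

lemma monotone_preperfectHullStage : Monotone (preperfectHullStage N g) :=
  monotone_nat_of_le_succ fun _ => subset_union_left.trans subset_union_left

lemma subset_preperfectHullStage : ∀ k, N k ⊆ preperfectHullStage N g k
  | 0 => subset_rfl
  | _ + 1 => subset_union_right

lemma mem_preperfectHullStage_succ {z : X} {k : ℕ} (hz : z ∈ preperfectHullStage N g k) :
    g z (k + 1) ∈ preperfectHullStage N g (k + 1) :=
  Or.inl (Or.inr (mem_image_of_mem _ hz))

variable [MetricSpace X]

-- The sharper bound `2⁻ᵏ - 2⁻⁽ᵏ⁺ᵐ⁾` is the invariant that survives the induction on `m`.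
lemma exists_dist_le_of_mem_preperfectHullStage {A : Set X} (hNA : ∀ k, N k ⊆ A)
    (hg : ∀ z k, dist (g z k) z ≤ (1 / 2) ^ k) (k m : ℕ) :
    ∀ y ∈ preperfectHullStage N g (k + m),
      ∃ z ∈ preperfectHullStage N g k ∪ A, dist y z ≤ (1 / 2) ^ k - (1 / 2) ^ (k + m) := by
  induction m with
  | zero => exact fun y hy => ⟨y, Or.inl hy, by simp⟩
  | succ m ih =>
    have hstep : (1 / 2 : ℝ) ^ (k + (m + 1)) = (1 / 2) ^ (k + m) / 2 := by ring
    have hpos : (0 : ℝ) < (1 / 2) ^ (k + m) := by positivity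
    rintro y ((hy | ⟨y', hy', rfl⟩) | hy)
    · obtain ⟨z, hz, hyz⟩ := ih y hy
      exact ⟨z, hz, by linarith⟩
    · obtain ⟨z, hz, hyz⟩ := ih y' hy'
      refine ⟨z, hz, (dist_triangle (g y' (k + m + 1)) y' z).trans ?_⟩
      linarith [hg y' (k + m + 1), pow_succ (1 / 2 : ℝ) (k + m)]
    · exact ⟨y, Or.inr (hNA _ hy), by
        rw [dist_self, sub_nonneg]
        exact pow_le_pow_of_le_one (by norm_num) (by norm_num) (by omega)⟩

lemma totallyBounded_iUnion_preperfectHullStage {A : Set X} (hN : ∀ k, (N k).Finite)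
    (hNA : ∀ k, N k ⊆ A) (hnet : ∀ k, A ⊆ ⋃ b ∈ N k, ball b ((1 / 2) ^ k))
    (hg : ∀ z k, dist (g z k) z ≤ (1 / 2) ^ k) :
    TotallyBounded (⋃ k, preperfectHullStage N g k) := by
  refine Metric.totallyBounded_iff.2 fun ε hε => ?_
  obtain ⟨k, hk⟩ := exists_pow_lt_of_lt_one (half_pos hε) (by norm_num : (1 / 2 : ℝ) < 1)
  refine ⟨preperfectHullStage N g k, preperfectHullStage_finite hN k,
    iUnion_subset fun j y hy => ?_⟩
  obtain ⟨z, hz, hyz⟩ := exists_dist_le_of_mem_preperfectHullStage hNA hg k j y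
    (monotone_preperfectHullStage (Nat.le_add_left j k) hy)
  have hyz' : dist y z < ε / 2 := by
    linarith [pow_pos (by norm_num : (0 : ℝ) < 1 / 2) (k + j)]
  rcases hz with hz | hz
  · exact mem_biUnion hz (mem_ball.2 (by linarith))
  · obtain ⟨b, hb, hzb⟩ := mem_iUnion₂.1 (hnet k hz)
    refine mem_biUnion (subset_preperfectHullStage k hb) (mem_ball.2 ?_)
    linarith [dist_triangle y z b, mem_ball.1 hzb]

lemma preperfect_iUnion_preperfectHullStage
    (hg : ∀ z ∈ ⋃ k, preperfectHullStage N g k, ∀ k, g z k ≠ z)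
    (hgdist : ∀ z k, dist (g z k) z ≤ (1 / 2) ^ k) :
    Preperfect (⋃ k, preperfectHullStage N g k) := by
  intro x hx
  obtain ⟨k, hxk⟩ := mem_iUnion.1 hx
  refine accPt_iff_nhds.2 fun V hV => ?_
  obtain ⟨ε, hε, hball⟩ := Metric.mem_nhds_iff.1 hV
  obtain ⟨j, hj⟩ := exists_pow_lt_of_lt_one hε (by norm_num : (1 / 2 : ℝ) < 1)
  have hxj : x ∈ preperfectHullStage N g (max k j) :=
    monotone_preperfectHullStage (le_max_left k j) hxk
  refine ⟨g x (max k j + 1), ⟨hball (mem_ball.2 ?_),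
    mem_iUnion.2 ⟨_, mem_preperfectHullStage_succ hxj⟩⟩, hg x hx _⟩
  refine (hgdist x _).trans_lt (lt_of_le_of_lt ?_ hj)
  exact pow_le_pow_of_le_one (by norm_num) (by norm_num) (by omega)

end PreperfectHull

theorem exists_isCompact_preperfect_superset {X : Type*} [MetricSpace X] [CompleteSpace X]
    {Z A : Set X} (hZ : IsClosed Z) (hZp : Preperfect Z) (hA : IsCompact A) (hAZ : A ⊆ Z) :
    ∃ M, A ⊆ M ∧ M ⊆ Z ∧ IsCompact M ∧ Preperfect M := by
  have hmove : ∀ z (k : ℕ), ∃ w, dist w z ≤ (1 / 2) ^ k ∧ (z ∈ Z → w ∈ Z ∧ w ≠ z) := by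
    intro z k
    by_cases hz : z ∈ Z
    · obtain ⟨w, ⟨hwz, hwZ⟩, hne⟩ := accPt_iff_nhds.1 (hZp z hz) _
        (closedBall_mem_nhds z (by positivity : (0 : ℝ) < (1 / 2) ^ k))
      exact ⟨w, hwz, fun _ => ⟨hwZ, hne⟩⟩
    · exact ⟨z, by simp, fun h => absurd h hz⟩
  choose g hgdist hgZ using hmove
  choose N hNA hNfin hnet using fun k : ℕ =>
    hA.finite_cover_balls (e := (1 / 2) ^ k) (by positivity)
  set S := ⋃ k, preperfectHullStage N g k
  have hSZ : S ⊆ Z := iUnion_subset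
    (preperfectHullStage_subset (fun k => (hNA k).trans hAZ) fun z hz k => (hgZ z k hz).1)
  have hS : Preperfect S :=
    preperfect_iUnion_preperfectHullStage (fun z hz k => (hgZ z k (hSZ hz)).2) hgdist
  have hAS : A ⊆ closure S := fun a ha => Metric.mem_closure_iff.2 fun ε hε => by
    obtain ⟨k, hk⟩ := exists_pow_lt_of_lt_one hε (by norm_num : (1 / 2 : ℝ) < 1)
    obtain ⟨b, hb, hab⟩ := mem_iUnion₂.1 (hnet k ha)
    exact ⟨b, mem_iUnion.2 ⟨k, subset_preperfectHullStage k hb⟩, (mem_ball.1 hab).trans hk⟩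
  exact ⟨closure S, hAS, hZ.closure_subset_iff.2 hSZ,
    (totallyBounded_iUnion_preperfectHullStage hNfin hNA hnet hgdist).closure.isCompact_of_isClosed
      isClosed_closure, hS.perfect_closure.acc⟩

theorem IsClosed.of_univ_pi {ι : Type*} {X : ι → Type*} [∀ i, TopologicalSpace (X i)]
    {W : ∀ i, Set (X i)} (h : IsClosed (univ.pi W)) (hne : (univ.pi W).Nonempty) (i : ι) :
    IsClosed (W i) := by
  classical
  obtain ⟨p, hp⟩ := hne
  rw [← update_preimage_univ_pi (i := i) fun j _ => hp j (mem_univ j)]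
  exact h.preimage (continuous_const.update i continuous_id)

theorem IsLocallyClosedSet.exists_isClosed_inter_closedBall {X : Type*} [PseudoMetricSpace X]
    {U V : Set X} (hU : IsLocallyClosedSet U) {x : X} (hx : x ∈ U) (hV : V ∈ 𝓝[U] x) :
    ∃ r > 0, U ∩ closedBall x r ⊆ V ∧ IsClosed (U ∩ closedBall x r) := by
  obtain ⟨V', hV', hV'V, hV'closed⟩ :=
    hU x hx (V ∩ U) (inter_mem hV self_mem_nhdsWithin) inter_subset_right
  obtain ⟨r, hr, hrV'⟩ := (nhdsWithin_hasBasis nhds_basis_closedBall U).mem_iff.1 hV'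
  have hUV' : U ∩ closedBall x r = V' ∩ closedBall x r :=
    subset_antisymm (fun y hy => ⟨hrV' ⟨hy.2, hy.1⟩, hy.2⟩)
      (inter_subset_inter_left _ fun y hy => (hV'V hy).2)
  refine ⟨r, hr, fun y hy => (hV'V (hrV' ⟨hy.2, hy.1⟩)).1, ?_⟩
  rw [hUV']
  exact hV'closed.inter isClosed_closedBall

section Cartesian

variable {K : Type*} {n : ℕ}

theorem IsCartesianSet.inter_closedBall [PseudoMetricSpace K] [IsUltrametricDist K]
    {V : Set (Fin n → K)} (hV : IsCartesianSet V) (x : Fin n → K) {r : ℝ} (hr : 0 < r) :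
    IsCartesianSet (V ∩ closedBall x r) := by
  obtain ⟨W, rfl, hW⟩ := hV
  refine ⟨fun i => closedBall (x i) r ∩ W i,
    by rw [inter_comm, closedBall_pi x hr.le, pi_inter_distrib],
    fun i => (hW i).open_inter (IsUltrametricDist.isOpen_closedBall _ hr.ne')⟩

theorem IsCartesianSet.exists_isCompact_isCartesianSet_superset [MetricSpace K] [CompleteSpace K]
    {Q A : Set (Fin n → K)} (hQ : IsCartesianSet Q) (hQc : IsClosed Q) (hA : IsCompact A)
    (hAQ : A ⊆ Q) : ∃ P, A ⊆ P ∧ P ⊆ Q ∧ IsCompact P ∧ IsCartesianSet P := by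
  rcases Q.eq_empty_or_nonempty with rfl | hne
  · exact ⟨∅, hAQ, subset_rfl, isCompact_empty, hQ⟩
  obtain ⟨W, rfl, hW⟩ := hQ
  choose M hAM hMW hMc hMp using fun i => exists_isCompact_preperfect_superset
    (hQc.of_univ_pi hne i) (hW i) (hA.image (continuous_apply i))
    (image_subset_iff.2 fun x hx => hAQ hx i (mem_univ i))
  exact ⟨univ.pi M, fun x hx i _ => hAM i ⟨x, hx, rfl⟩, pi_mono fun i _ => hMW i,
    isCompact_univ_pi hMc, M, rfl, hMp⟩

theorem isLocallyCartesian_iUnion [TopologicalSpace K] {ι : Type*} {P O : ι → Set (Fin n → K)}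
    (hO : ∀ i, IsOpen (O i)) (hdisj : Pairwise (Disjoint on O)) (hPO : ∀ i, P i ⊆ O i)
    (hP : ∀ i, IsCartesianSet (P i)) : IsLocallyCartesian (⋃ i, P i) := by
  intro z hz
  obtain ⟨i, hzi⟩ := mem_iUnion.1 hz
  refine ⟨P i, hzi, subset_iUnion P i, ⟨O i, hO i, ?_⟩, hP i⟩
  refine subset_antisymm (subset_inter (subset_iUnion P i) (hPO i)) ?_
  rintro w ⟨hw, hwO⟩
  obtain ⟨j, hwj⟩ := mem_iUnion.1 hw
  obtain rfl : j = i := by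
    by_contra hji
    exact disjoint_left.1 (hdisj hji) (hPO j hwj) hwO
  exact hwj

theorem IsLocallyCartesian.exists_isClosed_isCartesianSet_inter_closedBall [PseudoMetricSpace K]
    [IsUltrametricDist K] {U : Set (Fin n → K)} (hUlc : IsLocallyCartesian U)
    (hUcl : IsLocallyClosedSet U) {x : Fin n → K} (hx : x ∈ U) :
    ∃ r > 0, IsClosed (U ∩ closedBall x r) ∧ IsCartesianSet (U ∩ closedBall x r) := by
  obtain ⟨_, hxV, hVU, ⟨O, hO, rfl⟩, hV⟩ := hUlc x hx
  obtain ⟨r, hr, hrV, hclosed⟩ :=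
    hUcl.exists_isClosed_inter_closedBall hx (inter_mem_nhdsWithin U (hO.mem_nhds hxV.2))
  have hUr : U ∩ closedBall x r = U ∩ O ∩ closedBall x r :=
    subset_antisymm (subset_inter hrV inter_subset_right) (inter_subset_inter_left _ hVU)
  exact ⟨r, hr, hclosed, hUr ▸ hV.inter_closedBall x hr⟩

end Cartesian

theorem Set.Finite.exists_pairwiseDisjoint_sUnion_eq {α : Type*} {𝒮 : Set (Set α)}
    (h𝒮 : 𝒮.Finite) (hnest : ∀ s ∈ 𝒮, ∀ t ∈ 𝒮, s ⊆ t ∨ t ⊆ s ∨ Disjoint s t) :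
    ∃ ℬ ⊆ 𝒮, ℬ.PairwiseDisjoint id ∧ ⋃₀ ℬ = ⋃₀ 𝒮 := by
  refine ⟨{s | Maximal (· ∈ 𝒮) s}, fun s hs => hs.prop, ?_, ?_⟩
  · intro s hs t ht hst
    rcases hnest s hs.prop t ht.prop with h | h | h
    · exact absurd (hs.eq_of_le ht.prop h) hst
    · exact absurd (ht.eq_of_le hs.prop h).symm hst
    · exact h
  · refine (sUnion_mono fun s hs => hs.prop).antisymm ?_
    rintro x ⟨s, hs, hxs⟩
    obtain ⟨t, hst, ht⟩ := h𝒮.exists_le_maximal hs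
    exact ⟨t, ht, hst hxs⟩

theorem IsCompact.exists_finite_pairwiseDisjoint_closedBall_cover {X : Type*}
    [PseudoMetricSpace X] [IsUltrametricDist X] {C : Set X} (hC : IsCompact C) (r : X → ℝ)
    (hr : ∀ x ∈ C, 0 < r x) :
    ∃ ℬ : Set (Set X), ℬ.Finite ∧ ℬ.PairwiseDisjoint id ∧ C ⊆ ⋃₀ ℬ ∧
      ∀ b ∈ ℬ, ∃ x ∈ C, closedBall x (r x) = b := by
  obtain ⟨t, htC, hCt⟩ := hC.elim_nhds_subcover (fun x => closedBall x (r x)) fun x hx =>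
    closedBall_mem_nhds x (hr x hx)
  have hfin : ((fun x => closedBall x (r x)) '' t).Finite := t.finite_toSet.image _
  obtain ⟨ℬ, hℬ, hdisj, hunion⟩ := hfin.exists_pairwiseDisjoint_sUnion_eq <| by
    rintro _ ⟨x, -, rfl⟩ _ ⟨y, -, rfl⟩
    exact IsUltrametricDist.closedBall_subset_trichotomy x y (r x) (r y)
  refine ⟨ℬ, hfin.subset hℬ, hdisj, fun c hc => hunion ▸ (by simpa using hCt hc), fun b hb => ?_⟩
  obtain ⟨x, hxt, rfl⟩ := hℬ hb
  exact ⟨x, htC x hxt, rfl⟩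

theorem compact_subset_compact_locallyCartesian_general
    {K : Type*} [NontriviallyNormedField K] [IsUltrametricDist K] [CompleteSpace K]
    (n : ℕ) (U : Set (Fin n → K))
    (hUlc : IsLocallyCartesian U) (hUcl : IsLocallyClosedSet U)
    (C : Set (Fin n → K)) (hC : IsCompact C) (hCU : C ⊆ U) :
    ∃ L : Set (Fin n → K), C ⊆ L ∧ L ⊆ U ∧ IsCompact L ∧ IsLocallyCartesian L := by
  choose! r hr hclosed hcart using fun x (hx : x ∈ U) =>
    hUlc.exists_isClosed_isCartesianSet_inter_closedBall hUcl hx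
  obtain ⟨ℬ, hfin, hdisj, hCℬ, hball⟩ :=
    hC.exists_finite_pairwiseDisjoint_closedBall_cover r fun x hx => hr x (hCU hx)
  have hpiece : ∀ b ∈ ℬ, ∃ P, C ∩ b ⊆ P ∧ P ⊆ U ∩ b ∧ IsCompact P ∧ IsCartesianSet P := by
    rintro _ hb
    obtain ⟨x, hxC, rfl⟩ := hball _ hb
    exact (hcart x (hCU hxC)).exists_isCompact_isCartesianSet_superset (hclosed x (hCU hxC))
      (hC.inter_right isClosed_closedBall) (inter_subset_inter_left _ hCU)
  choose P hCP hPU hPc hPcart using hpiece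
  have : Finite ℬ := hfin.to_subtype
  refine ⟨⋃ b : ℬ, P b b.2, fun c hc => ?_,
    iUnion_subset fun b => (hPU b b.2).trans inter_subset_left,
    isCompact_iUnion fun b => hPc b b.2,
    isLocallyCartesian_iUnion (O := (↑)) (fun b => ?_)
      (fun b b' hne => hdisj b.2 b'.2 (Subtype.coe_injective.ne hne))
      (fun b => (hPU b b.2).trans inter_subset_right) fun b => hPcart b b.2⟩
  · obtain ⟨b, hb, hcb⟩ := hCℬ hc
    exact mem_iUnion.2 ⟨⟨b, hb⟩, hCP b hb ⟨hc, hcb⟩⟩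
  · obtain ⟨x, hxC, hxb⟩ := hball b b.2
    exact hxb ▸ IsUltrametricDist.isOpen_closedBall x (hr x (hCU hxC)).ne'

/-- **Compact locally cartesian hulls** (Lemma `verylast` (c)).
If `K` is a complete ultrametric field and `U ⊆ K^n` is locally closed and locally
cartesian, then every compact subset `C` of `U` is contained in a compact, locally
cartesian subset `L` with `C ⊆ L ⊆ U`. -/
theorem compact_subset_compact_locallyCartesian
    {K : Type*} [NontriviallyNormedField K] [IsUltrametricDist K] [CompleteSpace K]
    (n : ℕ) (hn : 1 ≤ n) (U : Set (Fin n → K))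
    (hUlc : IsLocallyCartesian U) (hUcl : IsLocallyClosedSet U)
    (C : Set (Fin n → K)) (hC : IsCompact C) (hCU : C ⊆ U) :
    ∃ L : Set (Fin n → K), C ⊆ L ∧ L ⊆ U ∧ IsCompact L ∧ IsLocallyCartesian L :=
  compact_subset_compact_locallyCartesian_general n U hUlc hUcl C hC hCU
end
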